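/- arXiv:1603.06071 — 5 statements merged into one kernel-verified Lean document; each statement's English description precedes it below -/
import Mathlib

section
/- Under these hypotheses, for every N ≥ 1 and all x, y ∈ X, one has ρ(Φᴺ(x), Φᴺ(y))² ≤ (Cᴺ Tᴺ / N!) · ρ(x,y)², where Φᴺ denotes the N-fold composition of Φ. -/
open MeasureTheory Set

/-! Iterating `D_t(Φ x, Φ y)² ≤ C ∫₀ᵗ D_s(x,y)² ds` starting from `D_s ≤ D_T = ρ` gives
`D_t(Φᴺ x, Φᴺ y)² ≤ Cᴺ tᴺ / N! · ρ(x,y)²` for every `t ∈ [0,T]`, as in the Picard iteration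
bound; take `t = T`. Integrability comes for free, since `s ↦ D_s(x,y)²` is monotone on `[0,T]`. -/

theorem integral_pow_div_factorial (n : ℕ) (t : ℝ) :
    ∫ s in (0 : ℝ)..t, s ^ n / (n.factorial : ℝ) = t ^ (n + 1) / ((n + 1).factorial : ℝ) := by
  rw [intervalIntegral.integral_div, integral_pow, Nat.factorial_succ]
  push_cast
  rw [zero_pow n.succ_ne_zero, sub_zero, div_div, mul_comm]

theorem le_pow_mul_pow_div_factorial_of_le_integral {f : ℕ → ℝ → ℝ} {C M T : ℝ} (hC : 0 ≤ C)
    (hint : ∀ n, IntervalIntegrable (f n) volume 0 T)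
    (hf₀ : ∀ t ∈ Icc 0 T, f 0 t ≤ M)
    (hf_succ : ∀ n, ∀ t ∈ Icc 0 T, f (n + 1) t ≤ C * ∫ s in (0 : ℝ)..t, f n s) :
    ∀ n, ∀ t ∈ Icc 0 T, f n t ≤ C ^ n * t ^ n / (n.factorial : ℝ) * M := by
  intro n
  induction n with
  | zero => simpa using hf₀
  | succ n ih =>
    intro t ht
    have hint_t : IntervalIntegrable (f n) volume 0 t := (hint n).mono_set <| by
      rw [uIcc_of_le ht.1, uIcc_of_le (ht.1.trans ht.2)]
      exact Icc_subset_Icc_right ht.2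
    have hbound : ∫ s in (0 : ℝ)..t, f n s
        ≤ C ^ n * M * (t ^ (n + 1) / ((n + 1).factorial : ℝ)) := by
      rw [← integral_pow_div_factorial, ← intervalIntegral.integral_const_mul]
      refine intervalIntegral.integral_mono_on ht.1 hint_t
        (Continuous.intervalIntegrable (by fun_prop) _ _) fun s hs => ?_
      calc f n s ≤ C ^ n * s ^ n / (n.factorial : ℝ) * M := ih s ⟨hs.1, hs.2.trans ht.2⟩
        _ = C ^ n * M * (s ^ n / (n.factorial : ℝ)) := by ring
    calc f (n + 1) t ≤ C * ∫ s in (0 : ℝ)..t, f n s := hf_succ n t ht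
      _ ≤ C * (C ^ n * M * (t ^ (n + 1) / ((n + 1).factorial : ℝ))) :=
        mul_le_mul_of_nonneg_left hbound hC
      _ = C ^ (n + 1) * t ^ (n + 1) / ((n + 1).factorial : ℝ) * M := by ring

theorem stmt2_general {X : Type*} [MetricSpace X]
    (T : ℝ) (hT : 0 < T) (C : ℝ) (hC : 0 ≤ C)
    (D : ℝ → X → X → ℝ)
    (hD_nonneg : ∀ t ∈ Icc (0 : ℝ) T, ∀ x y, 0 ≤ D t x y)
    (hD_mono : ∀ s t : ℝ, 0 ≤ s → s ≤ t → t ≤ T → ∀ x y, D s x y ≤ D t x y)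
    (hD_top : ∀ x y, D T x y = dist x y)
    (Φ : X → X)
    (hΦ : ∀ t ∈ Icc (0 : ℝ) T, ∀ x y,
      (D t (Φ x) (Φ y)) ^ 2 ≤ C * ∫ s in (0 : ℝ)..t, (D s x y) ^ 2) :
    ∀ N : ℕ, 1 ≤ N → ∀ x y : X,
      (dist (Φ^[N] x) (Φ^[N] y)) ^ 2
        ≤ (C ^ N * T ^ N / (Nat.factorial N : ℝ)) * (dist x y) ^ 2 := by
  intro N _ x y
  have hD_sq_mono : ∀ a b, MonotoneOn (fun s => D s a b ^ 2) (Icc 0 T) :=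
    fun a b s hs t ht hst => pow_le_pow_left₀ (hD_nonneg s hs a b) (hD_mono s t hs.1 hst ht.2 a b) 2
  have hD_le_dist : ∀ t ∈ Icc 0 T, D t x y ^ 2 ≤ dist x y ^ 2 := fun t ht =>
    hD_top x y ▸ hD_sq_mono x y ht ⟨hT.le, le_rfl⟩ ht.2
  have hbound := le_pow_mul_pow_div_factorial_of_le_integral
    (f := fun n s => D s (Φ^[n] x) (Φ^[n] y) ^ 2) hC
    (fun n => ((hD_sq_mono _ _).mono (uIcc_of_le hT.le).subset).intervalIntegrable)
    hD_le_dist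
    (fun n t ht => by simpa only [Function.iterate_succ_apply'] using hΦ t ht _ _)
    N T ⟨hT.le, le_rfl⟩
  simpa only [hD_top] using hbound

/-- In a nonempty complete metric space `(X, ρ)`, given a monotone family of
pseudometrics `D_t`, `t ∈ [0,T]`, with `D_T = ρ`, and a map `Φ` satisfying
`D_t(Φ x, Φ y)² ≤ C ∫₀ᵗ D_s(x,y)² ds`, one has, for all `N ≥ 1`,
`ρ(Φᴺ x, Φᴺ y)² ≤ (Cᴺ Tᴺ / N!) ρ(x,y)²`. -/
theorem stmt2 {X : Type*} [MetricSpace X] [CompleteSpace X] [Nonempty X]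
    (T : ℝ) (hT : 0 < T) (C : ℝ) (hC : 0 ≤ C)
    (D : ℝ → X → X → ℝ)
    (hD_nonneg : ∀ t ∈ Icc (0 : ℝ) T, ∀ x y, 0 ≤ D t x y)
    (hD_refl : ∀ t ∈ Icc (0 : ℝ) T, ∀ x, D t x x = 0)
    (hD_symm : ∀ t ∈ Icc (0 : ℝ) T, ∀ x y, D t x y = D t y x)
    (hD_tri : ∀ t ∈ Icc (0 : ℝ) T, ∀ x y z, D t x z ≤ D t x y + D t y z)
    (hD_mono : ∀ s t : ℝ, 0 ≤ s → s ≤ t → t ≤ T → ∀ x y, D s x y ≤ D t x y)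
    (hD_top : ∀ x y, D T x y = dist x y)
    (hD_meas : ∀ x y, Measurable fun t => D t x y)
    (Φ : X → X)
    (hΦ : ∀ t ∈ Icc (0 : ℝ) T, ∀ x y,
      (D t (Φ x) (Φ y)) ^ 2 ≤ C * ∫ s in (0 : ℝ)..t, (D s x y) ^ 2) :
    ∀ N : ℕ, 1 ≤ N → ∀ x y : X,
      (dist (Φ^[N] x) (Φ^[N] y)) ^ 2
        ≤ (C ^ N * T ^ N / (Nat.factorial N : ℝ)) * (dist x y) ^ 2 :=
  stmt2_general T hT C hC D hD_nonneg hD_mono hD_top Φ hΦ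
end

section
/- Under these hypotheses, the map Φ admits a unique fixed point: there exists a unique x̄ ∈ X with Φ(x̄) = x̄. -/
open MeasureTheory Set

/-- Under the hypotheses below,
pseudometrics `D_t`, `t ∈ [0,T]`, with `D_T = ρ`, and a map `Φ` satisfying
`D_t(Φ x, Φ y)² ≤ C ∫₀ᵗ D_s(x,y)² ds`, one has, for all `N ≥ 1`,
the map `Φ` admits a unique fixed point. -/
theorem stmt3 {X : Type*} [MetricSpace X] [CompleteSpace X] [Nonempty X]
    (T : ℝ) (hT : 0 < T) (C : ℝ) (hC : 0 ≤ C)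
    (D : ℝ → X → X → ℝ)
    (hD_nonneg : ∀ t ∈ Icc (0 : ℝ) T, ∀ x y, 0 ≤ D t x y)
    (hD_refl : ∀ t ∈ Icc (0 : ℝ) T, ∀ x, D t x x = 0)
    (hD_symm : ∀ t ∈ Icc (0 : ℝ) T, ∀ x y, D t x y = D t y x)
    (hD_tri : ∀ t ∈ Icc (0 : ℝ) T, ∀ x y z, D t x z ≤ D t x y + D t y z)
    (hD_mono : ∀ s t : ℝ, 0 ≤ s → s ≤ t → t ≤ T → ∀ x y, D s x y ≤ D t x y)
    (hD_top : ∀ x y, D T x y = dist x y)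
    (hD_meas : ∀ x y, Measurable fun t => D t x y)
    (Φ : X → X)
    (hΦ : ∀ t ∈ Icc (0 : ℝ) T, ∀ x y,
      (D t (Φ x) (Φ y)) ^ 2 ≤ C * ∫ s in (0 : ℝ)..t, (D s x y) ^ 2) :
    ∃! xbar : X, Φ xbar = xbar := by
  -- Key estimate by induction
  have key : ∀ n : ℕ, ∀ x y : X, ∀ t ∈ Icc (0:ℝ) T,
      (D t (Φ^[n] x) (Φ^[n] y)) ^ 2 ≤ (C * t) ^ n / n.factorial * (D T x y) ^ 2 := by
    intro n
    induction n with
    | zero =>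
      intro x y t ht
      simp only [Function.iterate_zero_apply, pow_zero, Nat.factorial_zero, Nat.cast_one,
        div_one, one_mul]
      have h1 : D t x y ≤ D T x y := hD_mono t T ht.1 ht.2 le_rfl x y
      exact pow_le_pow_left₀ (hD_nonneg t ht x y) h1 2
    | succ n ih =>
      intro x y t ht
      have htpos : (0:ℝ) ≤ t := ht.1
      -- monotoneOn integrand
      have hmonoD : MonotoneOn (fun s => (D s (Φ^[n] x) (Φ^[n] y)) ^ 2) (Icc 0 t) := by
        intro a ha b hb hab
        have haT : a ∈ Icc (0:ℝ) T := ⟨ha.1, ha.2.trans ht.2⟩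
        have h1 : D a (Φ^[n] x) (Φ^[n] y) ≤ D b (Φ^[n] x) (Φ^[n] y) :=
          hD_mono a b ha.1 hab (hb.2.trans ht.2) _ _
        exact pow_le_pow_left₀ (hD_nonneg a haT _ _) h1 2
      have hintf : IntervalIntegrable (fun s => (D s (Φ^[n] x) (Φ^[n] y)) ^ 2)
          volume 0 t := by
        apply MonotoneOn.intervalIntegrable
        rwa [uIcc_of_le htpos]
      have hintg : IntervalIntegrable (fun s => (C * s) ^ n / n.factorial * (D T x y) ^ 2)
          volume 0 t := by
        apply Continuous.intervalIntegrable
        continuity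
      have hle : ∀ s ∈ Icc (0:ℝ) t,
          (D s (Φ^[n] x) (Φ^[n] y)) ^ 2 ≤ (C * s) ^ n / n.factorial * (D T x y) ^ 2 := by
        intro s hs
        exact ih x y s ⟨hs.1, hs.2.trans ht.2⟩
      calc (D t (Φ^[n+1] x) (Φ^[n+1] y)) ^ 2
          ≤ C * ∫ s in (0:ℝ)..t, (D s (Φ^[n] x) (Φ^[n] y)) ^ 2 := by
            rw [Function.iterate_succ_apply' Φ n x, Function.iterate_succ_apply' Φ n y]
            exact hΦ t ht _ _
        _ ≤ C * ∫ s in (0:ℝ)..t, (C * s) ^ n / n.factorial * (D T x y) ^ 2 := by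
            apply mul_le_mul_of_nonneg_left _ hC
            exact intervalIntegral.integral_mono_on htpos hintf hintg hle
        _ = (C * t) ^ (n+1) / (n+1).factorial * (D T x y) ^ 2 := by
            have : ∀ s : ℝ, (C * s) ^ n / n.factorial * (D T x y) ^ 2
                = (C ^ n / n.factorial * (D T x y) ^ 2) * s ^ n := by
              intro s; ring
            simp_rw [this]
            rw [intervalIntegral.integral_const_mul, integral_pow]
            rw [Nat.factorial_succ]
            push_cast
            field_simp
            ring
  -- choose n with (C*T)^n / n! < 1
  have htend : Filter.Tendsto (fun n : ℕ => (C * T) ^ n / n.factorial) Filter.atTop (nhds 0) :=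
    FloorSemiring.tendsto_pow_div_factorial_atTop (C * T)
  obtain ⟨n, hn⟩ := (htend.eventually (gt_mem_nhds one_pos)).exists
  set r : ℝ := (C * T) ^ n / n.factorial with hr
  have hr0 : 0 ≤ r := by
    apply div_nonneg (pow_nonneg (mul_nonneg hC hT.le) n) (Nat.cast_nonneg _)
  have hr1 : r < 1 := hn
  set K : NNReal := ⟨Real.sqrt r, Real.sqrt_nonneg r⟩ with hK
  have hKlt : K < 1 := by
    rw [← NNReal.coe_lt_coe]
    show Real.sqrt r < 1
    rw [show (1:ℝ) = Real.sqrt 1 by simp]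
    exact Real.sqrt_lt_sqrt hr0 hr1
  have hlip : LipschitzWith K (Φ^[n]) := by
    apply LipschitzWith.of_dist_le_mul
    intro x y
    have h1 := key n x y T ⟨hT.le, le_rfl⟩
    rw [hD_top, hD_top] at h1
    have h2 : dist (Φ^[n] x) (Φ^[n] y) ^ 2 ≤ r * dist x y ^ 2 := by
      rw [hr]; linarith [h1]
    have h3 : Real.sqrt (dist (Φ^[n] x) (Φ^[n] y) ^ 2) ≤ Real.sqrt (r * dist x y ^ 2) :=
      Real.sqrt_le_sqrt h2
    rwa [Real.sqrt_sq dist_nonneg, Real.sqrt_mul hr0, Real.sqrt_sq dist_nonneg] at h3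
  have hcontr : ContractingWith K (Φ^[n]) := ⟨hKlt, hlip⟩
  refine ⟨hcontr.fixedPoint (Φ^[n]), hcontr.isFixedPt_fixedPoint_iterate, ?_⟩
  intro y hy
  exact hcontr.fixedPoint_unique ((Function.IsFixedPt.iterate hy n))
end

section
/- Let (E, ℰ, μ) be a σ-finite measure space, let I be a nonempty index set, and let (f_i)_{i∈I} be a family of measurable functions E → ℝ such that there is a measurable g : E → [0,∞) with |f_i(e)| ≤ g(e) for all i ∈ I and e ∈ E. Then there exist a measurable function f* : E → ℝ and a countable subset J ⊆ I such that: (i) f* = inf_{i∈J} f_i μ-almost everywhere; (ii) f* ≤ f_i μ-almost everywhere for every i ∈ I; (iii) for every measurable h : E → ℝ satisfying h ≤ f_i μ-almost everywhere for all i ∈ I, one has h ≤ f* μ-almost everywhere. That is, the essential infimum of the family (f_i)_{i∈I} exists and is attained along a countable subfamily. -/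
/-!
Pass to a finite measure `ν` with the same null sets as `μ`. Over countable nonempty `J ⊆ I`,
the function `⨅ j ∈ J, f j` is measurable and decreases as `J` grows, so
`J ↦ ∫ arctan (⨅ j ∈ J, f j) dν` is bounded and antitone; the union of a minimizing sequence
attains its infimum at some `J`. For any `i`, `insert i J` cannot lower the integral further,
so by strict monotonicity of `arctan` the infima over `insert i J` and over `J` agree a.e.,
i.e. `⨅ j ∈ J, f j ≤ f i` a.e. Maximality among a.e. lower bounds follows because `J` is
countable.
-/

open MeasureTheory

theorem ciInf_subtype_le_of_subset {ι α : Type*} [ConditionallyCompleteLattice α] {f : ι → α}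
    {s t : Set ι} (hf : BddBelow (f '' t)) (hs : s.Nonempty) (hst : s ⊆ t) :
    ⨅ i : t, f i ≤ ⨅ i : s, f i :=
  have := hs.to_subtype
  ciInf_mono_of_forall_exists (by rwa [← Set.image_eq_range])
    fun i => ⟨⟨i, hst i.2⟩, le_rfl⟩

theorem exists_isMinOn_countable_of_antitone {I : Type*} [Nonempty I] {Φ : Set I → ℝ}
    (hΦ : ∀ ⦃J K : Set I⦄, K.Countable → J.Nonempty → J ⊆ K → Φ K ≤ Φ J)
    (hbdd : BddBelow (Φ '' {J | J.Countable ∧ J.Nonempty})) :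
    ∃ J, J.Countable ∧ J.Nonempty ∧ IsMinOn Φ {J | J.Countable ∧ J.Nonempty} J := by
  set C := {J : Set I | J.Countable ∧ J.Nonempty}
  have hC : (Φ '' C).Nonempty := ⟨_, _, ⟨Set.countable_singleton (Classical.arbitrary I),
    Set.singleton_nonempty _⟩, rfl⟩
  obtain ⟨u, -, hu_lim, hu_mem⟩ := exists_seq_tendsto_sInf hC hbdd
  choose J hJ hΦJ using hu_mem
  have hUnion : (⋃ n, J n) ∈ C :=
    ⟨Set.countable_iUnion fun n => (hJ n).1, (hJ 0).2.mono (Set.subset_iUnion J 0)⟩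
  have hmin : Φ (⋃ n, J n) = sInf (Φ '' C) := by
    refine le_antisymm (ge_of_tendsto' hu_lim fun n => ?_) (csInf_le hbdd ⟨_, hUnion, rfl⟩)
    exact hΦJ n ▸ hΦ hUnion.1 (hJ n).2 (Set.subset_iUnion J n)
  exact ⟨_, hUnion.1, hUnion.2, fun K hK => hmin ▸ csInf_le hbdd ⟨K, hK, rfl⟩⟩

namespace MeasureTheory

variable {E : Type*} [MeasurableSpace E] {ν : Measure E} [IsFiniteMeasure ν] {F G : E → ℝ}

theorem integrable_arctan_comp (hF : Measurable F) : Integrable (fun e => Real.arctan (F e)) ν :=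
  .of_bound (Real.continuous_arctan.measurable.comp hF).aestronglyMeasurable (Real.pi / 2) <|
    .of_forall fun _ => abs_le.2 ⟨(Real.neg_pi_div_two_lt_arctan _).le,
      (Real.arctan_lt_pi_div_two _).le⟩

theorem integral_arctan_mono (hF : Measurable F) (hG : Measurable G) (hFG : F ≤ G) :
    ∫ e, Real.arctan (F e) ∂ν ≤ ∫ e, Real.arctan (G e) ∂ν :=
  integral_mono (integrable_arctan_comp hF) (integrable_arctan_comp hG)
    fun e => Real.arctan_mono (hFG e)

theorem neg_pi_div_two_mul_le_integral_arctan (hF : Measurable F) :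
    -(Real.pi / 2) * ν.real Set.univ ≤ ∫ e, Real.arctan (F e) ∂ν := by
  rw [mul_comm, ← smul_eq_mul, ← integral_const]
  exact integral_mono (integrable_const _) (integrable_arctan_comp hF)
    fun e => (Real.neg_pi_div_two_lt_arctan _).le

theorem ae_eq_of_le_of_integral_arctan_le (hF : Measurable F) (hG : Measurable G) (hFG : F ≤ G)
    (h : ∫ e, Real.arctan (G e) ∂ν ≤ ∫ e, Real.arctan (F e) ∂ν) : F =ᵐ[ν] G := by
  have heq := (integral_eq_iff_of_ae_le (integrable_arctan_comp hF) (integrable_arctan_comp hG)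
    (.of_forall fun e => Real.arctan_mono (hFG e))).1
    (le_antisymm (integral_arctan_mono hF hG hFG) h)
  filter_upwards [heq] with e he using Real.arctan_injective he

theorem exists_countable_ae_iInf_le {I : Type*} [Nonempty I] (f : I → E → ℝ)
    (hf : ∀ i, Measurable (f i)) (hbdd : ∀ e, BddBelow (Set.range fun i => f i e)) :
    ∃ J : Set I, J.Countable ∧ J.Nonempty ∧ ∀ i, ∀ᵐ e ∂ν, ⨅ j : J, f j e ≤ f i e := by
  have hmeas (J : Set I) (hJ : J.Countable) : Measurable fun e => ⨅ j : J, f j e :=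
    have := hJ.to_subtype
    .iInf fun j => hf j
  have hanti ⦃J K : Set I⦄ (hJ : J.Nonempty) (hJK : J ⊆ K) (e : E) :
      ⨅ k : K, f k e ≤ ⨅ j : J, f j e :=
    ciInf_subtype_le_of_subset ((hbdd e).mono (Set.image_subset_range _ _)) hJ hJK
  obtain ⟨J, hJc, hJne, hJmin⟩ := exists_isMinOn_countable_of_antitone
    (Φ := fun J => ∫ e, Real.arctan (⨅ j : J, f j e) ∂ν)
    (fun J K hK hJ hJK => integral_arctan_mono (hmeas K hK) (hmeas J (hK.mono hJK)) (hanti hJ hJK))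
    ⟨_, by rintro _ ⟨J, hJ, rfl⟩; exact neg_pi_div_two_mul_le_integral_arctan (hmeas J hJ.1)⟩
  refine ⟨J, hJc, hJne, fun i => ?_⟩
  have hK : (insert i J).Countable := hJc.insert i
  have hsame := ae_eq_of_le_of_integral_arctan_le (hmeas _ hK) (hmeas J hJc)
    (hanti hJne (Set.subset_insert i J)) (hJmin ⟨hK, Set.insert_nonempty i J⟩)
  filter_upwards [hsame] with e he
  rw [← he]
  exact ciInf_le ((hbdd e).mono (Set.range_comp_subset_range Subtype.val _))
    (⟨i, Set.mem_insert i J⟩ : (insert i J : Set I))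

end MeasureTheory

theorem stmt6_general {E : Type*} [MeasurableSpace E] (μ : Measure E) [SigmaFinite μ]
    {I : Type*} [Nonempty I]
    (f : I → E → ℝ) (hf : ∀ i, Measurable (f i))
    (g : E → ℝ)
    (hdom : ∀ i, ∀ e, |f i e| ≤ g e) :
    ∃ (fstar : E → ℝ) (J : Set I), Measurable fstar ∧ J.Countable ∧
      (∀ᵐ e ∂μ, fstar e = ⨅ j : J, f j e) ∧
      (∀ i, ∀ᵐ e ∂μ, fstar e ≤ f i e) ∧
      (∀ h : E → ℝ, Measurable h → (∀ i, ∀ᵐ e ∂μ, h e ≤ f i e) →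
        ∀ᵐ e ∂μ, h e ≤ fstar e) := by
  have hbdd (e : E) : BddBelow (Set.range fun i => f i e) :=
    ⟨-g e, by rintro _ ⟨i, rfl⟩; exact neg_le_of_abs_le (hdom i e)⟩
  obtain ⟨J, hJc, hJne, hJ⟩ := exists_countable_ae_iInf_le (ν := μ.toFinite) f hf hbdd
  have := hJc.to_subtype
  have := hJne.to_subtype
  refine ⟨fun e => ⨅ j : J, f j e, J, .iInf fun j => hf j, hJc, .of_forall fun _ => rfl,
    by simpa only [ae_toFinite] using hJ, fun h _ hh => ?_⟩
  filter_upwards [ae_all_iff.2 fun j : J => hh j] with e he using le_ciInf he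

/-- existence of an essential infimum of a uniformly dominated family of
measurable functions on a σ-finite measure space, attained along a countable subfamily. -/
theorem stmt6 {E : Type*} [MeasurableSpace E] (μ : Measure E) [SigmaFinite μ]
    {I : Type*} [Nonempty I]
    (f : I → E → ℝ) (hf : ∀ i, Measurable (f i))
    (g : E → ℝ) (hg : Measurable g) (hg_nonneg : ∀ e, 0 ≤ g e)
    (hdom : ∀ i, ∀ e, |f i e| ≤ g e) :
    ∃ (fstar : E → ℝ) (J : Set I), Measurable fstar ∧ J.Countable ∧
      (∀ᵐ e ∂μ, fstar e = ⨅ j : J, f j e) ∧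
      (∀ i, ∀ᵐ e ∂μ, fstar e ≤ f i e) ∧
      (∀ h : E → ℝ, Measurable h → (∀ i, ∀ᵐ e ∂μ, h e ≤ f i e) →
        ∀ᵐ e ∂μ, h e ≤ fstar e) :=
  stmt6_general μ f hf g hdom
end

section
/- Let (E, ℰ, μ) be a σ-finite measure space, let I be a nonempty index set, let λ : E → [0,∞) and g : E → [0,∞) be measurable, and for each i ∈ I let H_i : E × ℝ^d → ℝ be ℰ⊗Borel-measurable with |H_i(e,z) − H_i(e,z')| ≤ λ(e)·|z − z'| for all e ∈ E and z, z' ∈ ℝ^d, and |H_i(e,0)| ≤ g(e) for all e ∈ E. Then there exists an ℰ⊗Borel-measurable function H* : E × ℝ^d → ℝ such that: (i) |H*(e,z) − H*(e,z')| ≤ λ(e)·|z − z'| for all e ∈ E and z, z' ∈ ℝ^d; (ii) for every z ∈ ℝ^d, H*(·,z) is an essential infimum of the family (H_i(·,z))_{i∈I}, i.e. H*(·,z) ≤ H_i(·,z) μ-almost everywhere for all i ∈ I, and every measurable h : E → ℝ with h ≤ H_i(·,z) μ-almost everywhere for all i ∈ I satisfies h ≤ H*(·,z) μ-almost everywhere.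 -/
open MeasureTheory Set Real

/-! Replace `μ` by an equivalent finite measure `ν`. Among countable subfamilies `u`, minimise
`∫ arctan (⨅ k, f (u k)) dν`; a minimiser exists because countably many countable subfamilies
merge into one. Adjoining any `f i` to a minimiser cannot lower the integral, so it leaves the
infimum unchanged `ν`-a.e.: the infimum over a minimiser is an essential infimum.
Doing this at the points of a dense sequence in `ℝᵈ` at once gives `H*` as a countable infimum,
hence jointly measurable and `λ(e)`-Lipschitz in `z`; continuity in `z` then carries the a.e. lower
bound from the dense sequence to every `z`. -/

lemma iInf_unpair_le {α : Type*} {f : α → ℝ} (hf : BddBelow (range f)) (u : ℕ → ℕ → α) (n : ℕ) :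
    ⨅ m : ℕ, f (u m.unpair.1 m.unpair.2) ≤ ⨅ k, f (u n k) :=
  ciInf_mono_of_forall_exists (hf.mono (range_comp_subset_range _ f)) fun k =>
    ⟨Nat.pair n k, by simp only [Nat.unpair_pair, le_refl]⟩

section EssInf

variable {E I : Type*} [MeasurableSpace E] {ν : Measure E} {f : I → E → ℝ}

lemma integrable_arctan_iInf [IsFiniteMeasure ν] (hf : ∀ i, Measurable (f i)) (u : ℕ → I) :
    Integrable (fun e => arctan (⨅ k, f (u k) e)) ν := by
  refine (integrable_const (π / 2)).mono'
    (measurable_arctan.comp (Measurable.iInf fun k => hf (u k))).aestronglyMeasurable ?_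
  filter_upwards with e
  rw [Real.norm_eq_abs, abs_le]
  exact ⟨(neg_pi_div_two_lt_arctan _).le, (arctan_lt_pi_div_two _).le⟩

lemma integral_arctan_iInf_mono [IsFiniteMeasure ν] (hf : ∀ i, Measurable (f i)) {u v : ℕ → I}
    (huv : ∀ e, ⨅ k, f (u k) e ≤ ⨅ k, f (v k) e) :
    ∫ e, arctan (⨅ k, f (u k) e) ∂ν ≤ ∫ e, arctan (⨅ k, f (v k) e) ∂ν :=
  integral_mono (integrable_arctan_iInf hf u) (integrable_arctan_iInf hf v)
    fun e => arctan_strictMono.monotone (huv e)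

lemma exists_seq_minimizing_integral_arctan_iInf [IsFiniteMeasure ν] [Nonempty I]
    (hf : ∀ i, Measurable (f i)) (hbdd : ∀ e, BddBelow (range fun i => f i e)) :
    ∃ t : ℕ → I, ∀ u : ℕ → I,
      ∫ e, arctan (⨅ k, f (t k) e) ∂ν ≤ ∫ e, arctan (⨅ k, f (u k) e) ∂ν := by
  set Φ : (ℕ → I) → ℝ := fun u => ∫ e, arctan (⨅ k, f (u k) e) ∂ν
  have hΦ : BddBelow (range Φ) := by
    refine ⟨∫ _, -(π / 2) ∂ν, ?_⟩
    rintro _ ⟨u, rfl⟩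
    exact integral_mono (integrable_const _) (integrable_arctan_iInf hf u)
      fun e => (neg_pi_div_two_lt_arctan _).le
  have hnear (m : ℕ) : ∃ u, Φ u < (⨅ v, Φ v) + 1 / ((m : ℝ) + 1) :=
    exists_lt_of_ciInf_lt (lt_add_of_pos_right _ (by positivity))
  choose v hv using hnear
  set t : ℕ → I := fun m => v m.unpair.1 m.unpair.2
  have ht (m : ℕ) : Φ t < (⨅ v, Φ v) + 1 / ((m : ℝ) + 1) :=
    (integral_arctan_iInf_mono hf fun e => iInf_unpair_le (hbdd e) v m).trans_lt (hv m)
  refine ⟨t, fun u => (ciInf_le hΦ u).trans' (le_of_forall_pos_le_add fun ε hε => ?_)⟩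
  obtain ⟨m, hm⟩ := exists_nat_one_div_lt hε
  linarith [ht m]

lemma ae_iInf_le_of_minimizing_integral_arctan_iInf [IsFiniteMeasure ν] (hf : ∀ i, Measurable (f i))
    (hbdd : ∀ e, BddBelow (range fun i => f i e)) {t : ℕ → I}
    (ht : ∀ u : ℕ → I, ∫ e, arctan (⨅ k, f (t k) e) ∂ν ≤ ∫ e, arctan (⨅ k, f (u k) e) ∂ν)
    (i : I) : ∀ᵐ e ∂ν, ⨅ k, f (t k) e ≤ f i e := by
  set t' : ℕ → I := fun k => Nat.casesOn k i t
  have hbdd' (u : ℕ → I) (e : E) : BddBelow (range fun k => f (u k) e) :=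
    (hbdd e).mono (range_comp_subset_range u fun i => f i e)
  have hle (e : E) : ⨅ k, f (t' k) e ≤ ⨅ k, f (t k) e :=
    ciInf_mono_of_forall_exists (hbdd' t' e) fun k => ⟨k + 1, le_rfl⟩
  have heq : (fun e => arctan (⨅ k, f (t' k) e)) =ᵐ[ν] fun e => arctan (⨅ k, f (t k) e) :=
    (integral_eq_iff_of_ae_le (integrable_arctan_iInf hf t') (integrable_arctan_iInf hf t)
      (.of_forall fun e => arctan_strictMono.monotone (hle e))).mp
      ((integral_arctan_iInf_mono hf hle).antisymm (ht t'))
  filter_upwards [heq] with e he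
  rw [← arctan_injective he]
  exact ciInf_le (hbdd' t' e) 0

theorem exists_seq_ae_iInf_le (μ : Measure E) [SFinite μ] [Nonempty I]
    (hf : ∀ i, Measurable (f i)) (hbdd : ∀ e, BddBelow (range fun i => f i e)) :
    ∃ t : ℕ → I, ∀ i, ∀ᵐ e ∂μ, ⨅ k, f (t k) e ≤ f i e := by
  obtain ⟨t, ht⟩ := exists_seq_minimizing_integral_arctan_iInf (ν := μ.toFinite) hf hbdd
  exact ⟨t, fun i => (absolutelyContinuous_toFinite μ).ae_le
    (ae_iInf_le_of_minimizing_integral_arctan_iInf hf hbdd ht i)⟩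

theorem exists_seq_forall_ae_iInf_le (μ : Measure E) [SFinite μ] [Nonempty I]
    {f : ℕ → I → E → ℝ} (hf : ∀ n i, Measurable (f n i))
    (hbdd : ∀ n e, BddBelow (range fun i => f n i e)) :
    ∃ t : ℕ → I, ∀ n i, ∀ᵐ e ∂μ, ⨅ k, f n (t k) e ≤ f n i e := by
  choose u hu using fun n => exists_seq_ae_iInf_le μ (hf n) (hbdd n)
  refine ⟨fun m => u m.unpair.1 m.unpair.2, fun n i => ?_⟩
  filter_upwards [hu n i] with e he
  exact (iInf_unpair_le (hbdd n e) u n).trans he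

end EssInf

lemma LipschitzWith.ciInf {α ι : Type*} [PseudoMetricSpace α] [Nonempty ι] {K : NNReal}
    {f : ι → α → ℝ} (hf : ∀ i, LipschitzWith K (f i))
    (hbdd : ∀ x, BddBelow (range fun i => f i x)) :
    LipschitzWith K fun x => ⨅ i, f i x :=
  .of_le_add_mul K fun x y => sub_le_iff_le_add.mp <| le_ciInf fun i =>
    sub_le_iff_le_add.mpr <| (ciInf_le (hbdd x) i).trans ((hf i).le_add_mul x y)

lemma lipschitzWith_toNNReal_iff {α : Type*} [PseudoMetricSpace α] {K : ℝ} (hK : 0 ≤ K)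
    {f : α → ℝ} : LipschitzWith K.toNNReal f ↔ ∀ x y, |f x - f y| ≤ K * dist x y := by
  simp only [lipschitzWith_iff_dist_le_mul, Real.coe_toNNReal K hK, Real.dist_eq]

lemma neg_add_mul_norm_le_of_abs_sub_le {F : Type*} [SeminormedAddCommGroup F] {φ : F → ℝ}
    {K b : ℝ} (hφ : ∀ z z', |φ z - φ z'| ≤ K * ‖z - z'‖) (h0 : |φ 0| ≤ b) (z : F) :
    -(b + K * ‖z‖) ≤ φ z := by
  have := hφ z 0
  rw [sub_zero] at this
  linarith [neg_abs_le (φ z - φ 0), neg_abs_le (φ 0)]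

theorem stmt7_general {E : Type*} [MeasurableSpace E] (μ : Measure E) [SigmaFinite μ]
    {I : Type*} [Nonempty I] (d : ℕ)
    (lam g : E → ℝ) (hlam_nonneg : ∀ e, 0 ≤ lam e)
    (H : I → E × EuclideanSpace ℝ (Fin d) → ℝ)
    (hH_meas : ∀ i, Measurable (H i))
    (hH_lip : ∀ i, ∀ e, ∀ z z' : EuclideanSpace ℝ (Fin d),
      |H i (e, z) - H i (e, z')| ≤ lam e * ‖z - z'‖)
    (hH_dom : ∀ i, ∀ e, |H i (e, 0)| ≤ g e) :
    ∃ Hstar : E × EuclideanSpace ℝ (Fin d) → ℝ, Measurable Hstar ∧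
      (∀ e, ∀ z z' : EuclideanSpace ℝ (Fin d),
        |Hstar (e, z) - Hstar (e, z')| ≤ lam e * ‖z - z'‖) ∧
      (∀ z : EuclideanSpace ℝ (Fin d),
        (∀ i, ∀ᵐ e ∂μ, Hstar (e, z) ≤ H i (e, z)) ∧
        (∀ h : E → ℝ, Measurable h → (∀ i, ∀ᵐ e ∂μ, h e ≤ H i (e, z)) →
          ∀ᵐ e ∂μ, h e ≤ Hstar (e, z))) := by
  have hbdd (e : E) (z : EuclideanSpace ℝ (Fin d)) : BddBelow (range fun i => H i (e, z)) :=
    ⟨-(g e + lam e * ‖z‖), forall_mem_range.mpr fun i =>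
      neg_add_mul_norm_le_of_abs_sub_le (hH_lip i e) (hH_dom i e) z⟩
  have hlip (i : I) (e : E) : LipschitzWith (lam e).toNNReal fun z => H i (e, z) := by
    simpa only [lipschitzWith_toNNReal_iff (hlam_nonneg e), dist_eq_norm] using hH_lip i e
  obtain ⟨D, hD⟩ := TopologicalSpace.exists_dense_seq (EuclideanSpace ℝ (Fin d))
  obtain ⟨t, ht⟩ := exists_seq_forall_ae_iInf_le μ (f := fun n i e => H i (e, D n))
    (fun n i => (hH_meas i).comp (measurable_id.prodMk measurable_const)) fun n e => hbdd e (D n)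
  have hlip_star (e : E) : LipschitzWith (lam e).toNNReal fun z => ⨅ k, H (t k) (e, z) :=
    .ciInf (fun k => hlip (t k) e) fun z =>
      (hbdd e z).mono (range_comp_subset_range t fun i => H i (e, z))
  refine ⟨fun p => ⨅ k, H (t k) p, .iInf fun k => hH_meas (t k), fun e => ?_, fun z => ⟨?_, ?_⟩⟩
  · simpa only [lipschitzWith_toNNReal_iff (hlam_nonneg e), dist_eq_norm] using hlip_star e
  · intro i
    filter_upwards [ae_all_iff.mpr fun n => ht n i] with e he
    exact hD.induction_on z (isClosed_le (hlip_star e).continuous (hlip i e).continuous) he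
  · intro h _ hh
    filter_upwards [ae_all_iff.mpr fun k => hh (t k)] with e he
    exact le_ciInf he

/-- given a family `(H_i)_{i ∈ I}` of jointly measurable functions on
`E × ℝᵈ`, Lipschitz in `z` with measurable stochastic Lipschitz constant `λ` and dominated
at `z = 0`, there exists a jointly measurable `H*` with the same stochastic Lipschitz
modulus which, for every `z`, is an essential infimum of the family `(H_i(·,z))_{i ∈ I}`. -/
theorem stmt7 {E : Type*} [MeasurableSpace E] (μ : Measure E) [SigmaFinite μ]
    {I : Type*} [Nonempty I] (d : ℕ)
    (lam g : E → ℝ) (hlam : Measurable lam) (hlam_nonneg : ∀ e, 0 ≤ lam e)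
    (hg : Measurable g) (hg_nonneg : ∀ e, 0 ≤ g e)
    (H : I → E × EuclideanSpace ℝ (Fin d) → ℝ)
    (hH_meas : ∀ i, Measurable (H i))
    (hH_lip : ∀ i, ∀ e, ∀ z z' : EuclideanSpace ℝ (Fin d),
      |H i (e, z) - H i (e, z')| ≤ lam e * ‖z - z'‖)
    (hH_dom : ∀ i, ∀ e, |H i (e, 0)| ≤ g e) :
    ∃ Hstar : E × EuclideanSpace ℝ (Fin d) → ℝ, Measurable Hstar ∧
      (∀ e, ∀ z z' : EuclideanSpace ℝ (Fin d),
        |Hstar (e, z) - Hstar (e, z')| ≤ lam e * ‖z - z'‖) ∧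
      (∀ z : EuclideanSpace ℝ (Fin d),
        (∀ i, ∀ᵐ e ∂μ, Hstar (e, z) ≤ H i (e, z)) ∧
        (∀ h : E → ℝ, Measurable h → (∀ i, ∀ᵐ e ∂μ, h e ≤ H i (e, z)) →
          ∀ᵐ e ∂μ, h e ≤ Hstar (e, z))) :=
  stmt7_general μ d lam g hlam_nonneg H hH_meas hH_lip hH_dom
end

section
/- The set of measurable functions Ω × [0,T] → U is complete with respect to the Ekeland distance: if (U, δ) is additionally complete and (uₙ) is a sequence of measurable functions Ω × [0,T] → U that is Cauchy with respect to d_E, then there exists a measurable function u : Ω × [0,T] → U with d_E(uₙ, u) → 0 as n → ∞. -/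
open MeasureTheory Set Filter

attribute [local instance] MeasureTheory.Measure.Subtype.measureSpace

/-- The Ekeland distance `d_E(u,v) := P̂{(ω,t) : δ(u(ω,t), v(ω,t)) > 0}` on measurable
functions `Ω × [0,T] → U`, where `P̂ = P ⊗ Leb` on `Ω × [0,T]`. -/
noncomputable def ekelandDist {Ω : Type*} [MeasurableSpace Ω] (P : Measure Ω) (T : ℝ)
    {U : Type*} [MetricSpace U] (u v : Ω × Icc (0 : ℝ) T → U) : ℝ :=
  ((P.prod (volume : Measure (Icc (0 : ℝ) T)))
    {p : Ω × Icc (0 : ℝ) T | 0 < dist (u p) (v p)}).toReal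

/-- if `(U, δ)` is moreover complete, the set of measurable functions
`Ω × [0,T] → U` is complete for the Ekeland distance: any sequence that is Cauchy for
`d_E` converges in `d_E` to some measurable function. -/
theorem stmt9 {Ω : Type*} [MeasurableSpace Ω] (P : Measure Ω) [IsProbabilityMeasure P]
    (T : ℝ) (hT : 0 < T)
    {U : Type*} [MetricSpace U] [TopologicalSpace.SeparableSpace U] [CompleteSpace U]
    [MeasurableSpace U] [BorelSpace U]
    (un : ℕ → Ω × Icc (0 : ℝ) T → U) (hun : ∀ n, Measurable (un n))
    (hCauchy : ∀ ε > (0 : ℝ), ∃ N : ℕ, ∀ m ≥ N, ∀ n ≥ N,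
      ekelandDist P T (un m) (un n) < ε) :
    ∃ u : Ω × Icc (0 : ℝ) T → U, Measurable u ∧
      Tendsto (fun n => ekelandDist P T (un n) u) atTop (nhds 0) := by
  classical
  haveI hfin : IsFiniteMeasure (volume : Measure (Icc (0:ℝ) T)) := by
    constructor
    rw [Measure.Subtype.volume_univ nullMeasurableSet_Icc, Real.volume_Icc]
    exact ENNReal.ofReal_lt_top
  set μ := P.prod (volume : Measure (Icc (0 : ℝ) T)) with hμ
  haveI : IsFiniteMeasure μ := by rw [hμ]; infer_instance
  -- Ekeland distance as measure of the "difference set"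
  have hED : ∀ u v : Ω × Icc (0 : ℝ) T → U,
      ekelandDist P T u v = (μ {p | u p ≠ v p}).toReal := by
    intro u v
    simp only [ekelandDist, ← hμ]
    congr 1
    apply congrArg
    ext p
    simp [dist_pos]
  -- triangle inequality for the Ekeland distance
  have htri : ∀ v w x : Ω × Icc (0 : ℝ) T → U,
      ekelandDist P T v x ≤ ekelandDist P T v w + ekelandDist P T w x := by
    intro v w x
    rw [hED, hED, hED]
    have hsub : {p | v p ≠ x p} ⊆ {p | v p ≠ w p} ∪ {p | w p ≠ x p} := by
      intro p hp
      by_cases h : v p = w p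
      · exact Or.inr (fun h2 => hp (h.trans h2))
      · exact Or.inl h
    calc (μ {p | v p ≠ x p}).toReal
        ≤ (μ ({p | v p ≠ w p} ∪ {p | w p ≠ x p})).toReal :=
          ENNReal.toReal_mono (measure_ne_top _ _) (measure_mono hsub)
      _ ≤ (μ {p | v p ≠ w p} + μ {p | w p ≠ x p}).toReal :=
          ENNReal.toReal_mono (ENNReal.add_ne_top.mpr ⟨measure_ne_top _ _, measure_ne_top _ _⟩)
            (measure_union_le _ _)
      _ = (μ {p | v p ≠ w p}).toReal + (μ {p | w p ≠ x p}).toReal :=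
          ENNReal.toReal_add (measure_ne_top _ _) (measure_ne_top _ _)
  -- choose a rapidly Cauchy subsequence
  have hNex : ∀ k : ℕ, ∃ N, ∀ m ≥ N, ∀ n ≥ N, ekelandDist P T (un m) (un n) < (1/2:ℝ)^k :=
    fun k => hCauchy _ (by positivity)
  choose N hNspec using hNex
  set φ : ℕ → ℕ := fun k => (Finset.range (k+1)).sup N + k with hφ
  have hφge : ∀ k j, k ≤ j → N k ≤ φ j := by
    intro k j hkj
    calc N k ≤ (Finset.range (j+1)).sup N :=
          Finset.le_sup (Finset.mem_range.mpr (Nat.lt_succ_of_le hkj))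
      _ ≤ φ j := Nat.le_add_right _ _
  have hφmono : StrictMono φ := by
    apply strictMono_nat_of_lt_succ
    intro k
    have h1 : (Finset.range (k+1)).sup N ≤ (Finset.range (k+1+1)).sup N :=
      Finset.sup_mono (Finset.range_subset_range.mpr (by omega))
    simp only [hφ]
    omega
  -- the difference sets of the subsequence
  set A : ℕ → Set (Ω × Icc (0 : ℝ) T) := fun k => {p | un (φ k) p ≠ un (φ (k+1)) p} with hA
  have hAk : ∀ k, μ (A k) ≤ (2⁻¹ : ENNReal)^k := by
    intro k
    have h := hNspec k (φ k) (hφge k k le_rfl) (φ (k+1)) (hφge k (k+1) (by omega))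
    rw [hED] at h
    have h2 : μ (A k) < ENNReal.ofReal ((1/2:ℝ)^k) :=
      (ENNReal.lt_ofReal_iff_toReal_lt (measure_ne_top _ _)).mpr h
    have h3 : ENNReal.ofReal ((1/2:ℝ)^k) = (2⁻¹:ENNReal)^k := by
      rw [ENNReal.ofReal_pow (by norm_num), one_div,
        ENNReal.ofReal_inv_of_pos (by norm_num), ENNReal.ofReal_ofNat]
    exact le_of_lt (h3 ▸ h2)
  have hsum : (∑' k, μ (A k)) ≠ ⊤ := by
    apply ne_top_of_le_ne_top (b := ∑' k : ℕ, (2⁻¹:ENNReal)^k)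
    · rw [ENNReal.tsum_geometric, ENNReal.one_sub_inv_two, inv_inv]
      exact ENNReal.ofNat_ne_top
    · exact ENNReal.tsum_le_tsum hAk
  have hlimsup : μ (limsup A atTop) = 0 := measure_limsup_atTop_eq_zero hsum
  -- a.e. convergence of the subsequence
  have hae : ∀ᵐ p ∂μ, ∃ l, Tendsto (fun k => un (φ k) p) atTop (nhds l) := by
    have h0 : ∀ᵐ p ∂μ, p ∉ limsup A atTop := by
      rw [ae_iff]
      simpa using hlimsup
    filter_upwards [h0] with p hp
    rw [mem_limsup_iff_frequently_mem, not_frequently] at hp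
    rw [eventually_atTop] at hp
    obtain ⟨K, hK⟩ := hp
    have hconst : ∀ j, K ≤ j → un (φ j) p = un (φ K) p := by
      intro j hj
      induction j, hj using Nat.le_induction with
      | base => rfl
      | succ j hj ih =>
        have : un (φ j) p = un (φ (j+1)) p := by
          by_contra hne
          exact hK j hj hne
        rw [← this, ih]
    refine ⟨un (φ K) p, Tendsto.congr' ?_ tendsto_const_nhds⟩
    rw [EventuallyEq, eventually_atTop]
    exact ⟨K, fun j hj => (hconst j hj).symm⟩
  obtain ⟨u, humeas, hulim⟩ :=
    measurable_limit_of_tendsto_metrizable_ae (fun k => (hun (φ k)).aemeasurable) hae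
  refine ⟨u, humeas, ?_⟩
  -- tail unions
  set E : ℕ → Set (Ω × Icc (0 : ℝ) T) := fun k => ⋃ j : ℕ, A (k + j) with hE
  have hEbound : ∀ k, μ (E k) ≤ (2⁻¹:ENNReal)^k * 2 := by
    intro k
    calc μ (E k) ≤ ∑' j : ℕ, μ (A (k + j)) := measure_iUnion_le _
      _ ≤ ∑' j : ℕ, (2⁻¹:ENNReal)^(k+j) := ENNReal.tsum_le_tsum (fun j => hAk (k+j))
      _ = (2⁻¹:ENNReal)^k * ∑' j : ℕ, (2⁻¹:ENNReal)^j := by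
          rw [← ENNReal.tsum_mul_left]
          simp [pow_add]
      _ = (2⁻¹:ENNReal)^k * 2 := by
          rw [ENNReal.tsum_geometric, ENNReal.one_sub_inv_two, inv_inv]
  -- a.e., outside `E k` the k-th subsequence element agrees with the limit
  have hkey : ∀ k, ∀ᵐ p ∂μ, p ∉ E k → un (φ k) p = u p := by
    intro k
    filter_upwards [hulim] with p hp hpE
    simp only [hE, mem_iUnion, not_exists] at hpE
    have hconst : ∀ j, k ≤ j → un (φ j) p = un (φ k) p := by
      intro j hj
      induction j, hj using Nat.le_induction with
      | base => rfl
      | succ j hj ih =>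
        have : un (φ j) p = un (φ (j+1)) p := by
          by_contra hne
          have := hpE (j - k)
          rw [Nat.add_sub_cancel' hj] at this
          exact this hne
        rw [← this, ih]
    have h2 : Tendsto (fun j => un (φ j) p) atTop (nhds (un (φ k) p)) := by
      refine Tendsto.congr' ?_ tendsto_const_nhds
      rw [EventuallyEq, eventually_atTop]
      exact ⟨k, fun j hj => (hconst j hj).symm⟩
    exact tendsto_nhds_unique h2 hp
  -- bound on the Ekeland distance from the subsequence to the limit
  have hsubdist : ∀ k, ekelandDist P T (un (φ k)) u ≤ (1/2:ℝ)^k * 2 := by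
    intro k
    rw [hED]
    have hsub : {p | un (φ k) p ≠ u p} ⊆
        E k ∪ {p | ¬ (p ∉ E k → un (φ k) p = u p)} := by
      intro p hp
      by_cases h : p ∈ E k
      · exact Or.inl h
      · exact Or.inr (fun himp => hp (himp h))
    have hnull : μ {p | ¬ (p ∉ E k → un (φ k) p = u p)} = 0 := by
      rw [← ae_iff] at *
      exact hkey k
    have h1 : μ {p | un (φ k) p ≠ u p} ≤ (2⁻¹:ENNReal)^k * 2 := by
      calc μ {p | un (φ k) p ≠ u p}
          ≤ μ (E k ∪ {p | ¬ (p ∉ E k → un (φ k) p = u p)}) := measure_mono hsub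
        _ ≤ μ (E k) + μ {p | ¬ (p ∉ E k → un (φ k) p = u p)} := measure_union_le _ _
        _ = μ (E k) := by rw [hnull, add_zero]
        _ ≤ (2⁻¹:ENNReal)^k * 2 := hEbound k
    calc (μ {p | un (φ k) p ≠ u p}).toReal
        ≤ ((2⁻¹:ENNReal)^k * 2).toReal :=
          ENNReal.toReal_mono (ENNReal.mul_ne_top (ENNReal.pow_ne_top (by simp)) (by simp)) h1
      _ = (1/2:ℝ)^k * 2 := by
          rw [ENNReal.toReal_mul, ENNReal.toReal_pow]
          norm_num
  -- conclude convergence of the full sequence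
  have hnonneg : ∀ n, 0 ≤ ekelandDist P T (un n) u := fun n => ENNReal.toReal_nonneg
  rw [Metric.tendsto_atTop]
  intro ε hε
  obtain ⟨M, hM⟩ := hCauchy (ε/4) (by linarith)
  obtain ⟨k0, hk0⟩ := exists_pow_lt_of_lt_one (show (0:ℝ) < ε/4 by linarith)
    (show (1/2:ℝ) < 1 by norm_num)
  set k := max M k0 with hk
  have hφk : M ≤ φ k := le_trans (le_max_left _ _) (le_trans (hφmono.le_apply) le_rfl)
  have hdk : ekelandDist P T (un (φ k)) u < ε/2 := by
    have h1 : ekelandDist P T (un (φ k)) u ≤ (1/2:ℝ)^k * 2 := hsubdist k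
    have h2 : (1/2:ℝ)^k ≤ (1/2:ℝ)^k0 :=
      pow_le_pow_of_le_one (by norm_num) (by norm_num) (le_max_right _ _)
    nlinarith
  refine ⟨M, fun n hn => ?_⟩
  rw [Real.dist_eq, sub_zero, abs_of_nonneg (hnonneg n)]
  calc ekelandDist P T (un n) u
      ≤ ekelandDist P T (un n) (un (φ k)) + ekelandDist P T (un (φ k)) u := htri _ _ _
    _ < ε/4 + ε/2 := add_lt_add (hM n hn (φ k) hφk) hdk
    _ < ε := by linarith
end
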